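/- Every subgroup Γ of A₄ × A₄ with |Γ| > 16 admits a surjective group homomorphism onto A₄. -/
import Mathlib


/-- The alternating group `A₄` on four letters. -/
abbrev A4 : Type := alternatingGroup (Fin 4)

lemma cardA4 : Nat.card A4 = 12 := by
  show Nat.card (alternatingGroup (Fin 4)) = 12
  have := two_mul_card_alternatingGroup (α := Fin 4)
  rw [Fintype.card_perm, ← Nat.card_eq_fintype_card,
    show (Fintype.card (Fin 4)).factorial = 24 by decide] at this
  omega

lemma sq9 : (Finset.univ.image (fun x : A4 => x ^ 2)).card = 9 := by decide

lemma no6 (K : Subgroup A4) (h6 : Nat.card K = 6) : False := by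
  classical
  have hidx : K.index = 2 := by
    have := K.card_mul_index
    rw [cardA4, h6] at this
    omega
  have hsq : ∀ x : A4, x ^ 2 ∈ K := Subgroup.sq_mem_of_index_two hidx
  have hsub : (Finset.univ.image (fun x : A4 => x ^ 2)) ⊆ (K : Set A4).toFinset := by
    intro y hy
    simp only [Finset.mem_image, Finset.mem_univ, true_and] at hy
    obtain ⟨x, rfl⟩ := hy
    simpa using hsq x
  have hle := Finset.card_le_card hsub
  rw [sq9, Set.toFinset_card] at hle
  have hc : Nat.card K = Fintype.card ((K : Set A4) : Type) :=
    Nat.card_eq_fintype_card.trans (Fintype.card_congr (Equiv.refl _))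
  omega

lemma eq_top_of_four_lt (K : Subgroup A4) (h4 : 4 < Nat.card K) : K = ⊤ := by
  have hdvd : Nat.card K ∣ 12 := cardA4 ▸ K.card_subgroup_dvd_card
  have hle : Nat.card K ≤ 12 := Nat.le_of_dvd (by norm_num) hdvd
  have h12 : Nat.card K = 12 := by
    interval_cases h : (Nat.card K) <;> first
      | rfl
      | (exact absurd hdvd (by decide))
      | (exact (no6 K h).elim)
  exact K.eq_top_of_card_eq (by rw [h12, cardA4])

/-- Every subgroup of `A₄ × A₄` of order greater than `16` admits a surjective group
homomorphism onto `A₄`. -/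
theorem A4_prod_A4_large_subgroup_surjects_onto_A4
    (Γ : Subgroup (A4 × A4)) (h : 16 < Nat.card Γ) :
    ∃ φ : Γ →* A4, Function.Surjective φ := by
  classical
  set f1 : Γ →* A4 := (MonoidHom.fst A4 A4).comp Γ.subtype with hf1
  set f2 : Γ →* A4 := (MonoidHom.snd A4 A4).comp Γ.subtype with hf2
  -- Γ embeds in f1.range × f2.range
  have hemb : Function.Injective
      (fun g : Γ => ((⟨f1 g, MonoidHom.mem_range.2 ⟨g, rfl⟩⟩ : f1.range),
        (⟨f2 g, MonoidHom.mem_range.2 ⟨g, rfl⟩⟩ : f2.range))) := by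
    intro a b hab
    simp only [Prod.mk.injEq, Subtype.mk.injEq] at hab
    have : (a : A4 × A4) = b := Prod.ext hab.1 hab.2
    exact Subtype.ext this
  have hcard : Nat.card Γ ≤ Nat.card f1.range * Nat.card f2.range := by
    have := Nat.card_le_card_of_injective _ hemb
    rwa [Nat.card_prod] at this
  have key : 4 < Nat.card f1.range ∨ 4 < Nat.card f2.range := by
    by_contra hc
    push_neg at hc
    have := Nat.mul_le_mul hc.1 hc.2
    omega
  rcases key with hk | hk
  · exact ⟨f1, MonoidHom.range_eq_top.1 (eq_top_of_four_lt _ hk)⟩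
  · exact ⟨f2, MonoidHom.range_eq_top.1 (eq_top_of_four_lt _ hk)⟩
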